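/- Let S be totally ordered and X a nonempty finite subset of S with maximum element max X; set X* = X \ {max X}. Then X* is the maximum, in the lexicographic order, of the set of finite subsets X' of S satisfying X' < X and max X' < max X. -/
import Mathlib


/-- The lexicographic order on finite subsets of a linearly ordered set:
`X ≤ Y` iff `min (Y \ X) ≤ min (X \ Y)`, with `min ∅ = ⊤`. -/
def lexLE {S : Type*} [LinearOrder S] (X Y : Finset S) : Prop :=
  (Y \ X).min ≤ (X \ Y).min

/-- Strict lexicographic order. -/
def lexLT {S : Type*} [LinearOrder S] (X Y : Finset S) : Prop :=
  lexLE X Y ∧ ¬ lexLE Y X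

/-- For a nonempty finite subset `X` of a totally ordered set `S`, the set
`X* = X \ {max X}` is the maximum, in the lexicographic order, of the set of
finite subsets `X'` with `X' < X` and `max X' < max X` (where `max ∅` is
smaller than every element of `S`). -/
theorem erase_max_is_max {S : Type*} [LinearOrder S] (X : Finset S)
    (hX : X.Nonempty) :
    (lexLT (X.erase (X.max' hX)) X ∧ (X.erase (X.max' hX)).max < X.max) ∧
    ∀ X' : Finset S, lexLT X' X → X'.max < X.max →
      lexLE X' (X.erase (X.max' hX)) := by
  set m := X.max' hX with hm
  have hmX : m ∈ X := X.max'_mem hX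
  have hXmax : X.max = ↑m := (X.coe_max' hX).symm
  have h1 : X.erase m \ X = ∅ := by
    rw [Finset.sdiff_eq_empty_iff_subset]; exact Finset.erase_subset _ _
  have h2 : X \ X.erase m = {m} := by
    ext a
    simp only [Finset.mem_sdiff, Finset.mem_erase, Finset.mem_singleton, not_and]
    constructor
    · rintro ⟨ha, h⟩
      by_contra hne
      exact (h hne) ha
    · rintro rfl
      exact ⟨hmX, fun h _ => h rfl⟩
  constructor
  · refine ⟨⟨?_, ?_⟩, ?_⟩
    · unfold lexLE
      rw [h1, h2]
      simp
    · unfold lexLE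
      rw [h1, h2]
      simp [Finset.min_singleton]
    · rw [hXmax]
      rcases (X.erase m).eq_empty_or_nonempty with he | he
      · rw [he]
        simp [WithBot.bot_lt_coe]
      · rw [← Finset.coe_max' he, WithBot.coe_lt_coe]
        apply Finset.max'_lt_iff _ he |>.mpr
        intro b hb
        rcases Finset.mem_erase.mp hb with ⟨hne, hbX⟩
        exact lt_of_le_of_ne (X.le_max' b hbX) hne
  · rintro X' ⟨hle, hnle⟩ hmax
    rw [hXmax] at hmax
    have hmX' : m ∉ X' := fun h => absurd (Finset.le_max h) (not_le.mpr hmax)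
    unfold lexLE at *
    have hB : X' \ X.erase m = X' \ X := by
      ext a
      simp only [Finset.mem_sdiff, Finset.mem_erase, not_and]
      constructor
      · rintro ⟨ha, h⟩
        refine ⟨ha, fun hx => ?_⟩
        by_cases hne : a = m
        · exact hmX' (hne ▸ ha)
        · exact (h hne) hx
      · rintro ⟨ha, h⟩
        exact ⟨ha, fun _ hx => h hx⟩
    have hA : X.erase m \ X' = (X \ X').erase m := by
      ext a
      simp only [Finset.mem_sdiff, Finset.mem_erase]
      tauto
    rw [hA, hB]
    have hmA : m ∈ X \ X' := Finset.mem_sdiff.mpr ⟨hmX, hmX'⟩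
    have hlt : (X \ X').min < (X' \ X).min := not_le.mp hnle
    set A := X \ X' with hAdef
    set B := X' \ X with hBdef
    have hAne : A.Nonempty := ⟨m, hmA⟩
    by_cases ha : A.min' hAne = m
    · have hBe : B = ∅ := by
        rw [← Finset.not_nonempty_iff_eq_empty]
        rintro ⟨b, hb⟩
        have h1 : (↑m : WithTop S) < ↑b := by
          calc (↑m : WithTop S) = A.min := by rw [← ha, Finset.coe_min']
            _ < B.min := hlt
            _ ≤ ↑b := Finset.min_le hb
        have hbX' : b ∈ X' := (Finset.mem_sdiff.mp hb).1
        have h2 : (↑b : WithBot S) < ↑m := lt_of_le_of_lt (Finset.le_max hbX') hmax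
        exact absurd (WithTop.coe_lt_coe.mp h1) (not_lt.mpr (le_of_lt (WithBot.coe_lt_coe.mp h2)))
      rw [hBe]
      simp
    · have haA : A.min' hAne ∈ A.erase m := Finset.mem_erase.mpr ⟨ha, A.min'_mem hAne⟩
      calc (A.erase m).min ≤ ↑(A.min' hAne) := Finset.min_le haA
        _ = A.min := Finset.coe_min' hAne
        _ ≤ B.min := le_of_lt hlt
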